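/- arXiv:1609.09605 — 3 statements merged into one kernel-verified Lean document; each statement's English description precedes it below -/
import Mathlib

section
/- Let a, b be probability vectors in ℝᴺ (a_j, b_j ≥ 0, Σa_j = Σb_j = 1) with |a_j − b_j| ≤ ε for all j, let s ∈ ℝᴺ with 0 < s_j ≤ S, and let L(1),…,L(N) be matrices with ‖L(j)‖_∞ ≤ M. Then ‖Σ_j a_j s_j L(j) − (Σ_j a_j s_j)/(Σ_j b_j s_j) · Σ_j b_j s_j L(j)‖_∞ ≤ 2N·S·M·ε. -/
/-!
With `r = (∑ a_j s_j) / (∑ b_j s_j)` the matrix is `∑ c_j • L j` where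
`c_j = a_j s_j - r b_j s_j`, so its row-sum norm is at most `M ∑ |c_j|`.
Splitting `c_j = (a_j - b_j) s_j + (1 - r) b_j s_j`, the second parts have total mass
`|1 - r| ∑ b_j s_j = |∑ (b_j - a_j) s_j|`, hence
`∑ |c_j| ≤ 2 ∑ |a_j - b_j| s_j ≤ 2 N S ε`.
-/

open Matrix Finset

/-- ‖A‖_∞ : the maximum absolute row sum of a matrix. -/
noncomputable def rowSumNorm {m : ℕ} (A : Matrix (Fin m) (Fin m) ℝ) : ℝ :=
  ⨆ i, ∑ j, |A i j|

attribute [local instance] Matrix.linftyOpNormedAddCommGroup Matrix.linftyOpNormedSpace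

theorem rowSumNorm_eq_norm {m : ℕ} (A : Matrix (Fin m) (Fin m) ℝ) : rowSumNorm A = ‖A‖ := by
  simp only [rowSumNorm, linfty_opNorm_def, Finset.sup_univ_eq_ciSup, NNReal.coe_iSup,
    NNReal.coe_sum, coe_nnnorm, Real.norm_eq_abs]

theorem norm_sum_smul_le {ι E : Type*} [SeminormedAddCommGroup E] [NormedSpace ℝ E]
    (s : Finset ι) (c : ι → ℝ) (x : ι → E) {M : ℝ} (hx : ∀ i ∈ s, ‖x i‖ ≤ M) :
    ‖∑ i ∈ s, c i • x i‖ ≤ (∑ i ∈ s, |c i|) * M :=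
  calc ‖∑ i ∈ s, c i • x i‖ ≤ ∑ i ∈ s, |c i| * ‖x i‖ := by
        simpa only [norm_smul, Real.norm_eq_abs] using norm_sum_le s fun i => c i • x i
    _ ≤ ∑ i ∈ s, |c i| * M := sum_le_sum fun i hi => by gcongr; exact hx i hi
    _ = (∑ i ∈ s, |c i|) * M := (sum_mul ..).symm

theorem sum_abs_sub_div_mul_le {ι : Type*} (s : Finset ι) (u v : ι → ℝ)
    (hv : ∀ i ∈ s, 0 ≤ v i) :
    ∑ i ∈ s, |u i - (∑ j ∈ s, u j) / (∑ j ∈ s, v j) * v i| ≤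
      2 * ∑ i ∈ s, |u i - v i| := by
  set U := ∑ j ∈ s, u j
  set V := ∑ j ∈ s, v j
  have hsplit : ∀ i ∈ s, |u i - U / V * v i| ≤ |u i - v i| + |1 - U / V| * v i := fun i hi =>
    calc |u i - U / V * v i| = |(u i - v i) + (1 - U / V) * v i| := by congr 1; ring
      _ ≤ |u i - v i| + |(1 - U / V) * v i| := abs_add_le _ _
      _ = |u i - v i| + |1 - U / V| * v i := by rw [abs_mul, abs_of_nonneg (hv i hi)]
  have hmass : |1 - U / V| * V ≤ ∑ i ∈ s, |u i - v i| := by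
    rcases eq_or_ne V 0 with hV | hV
    · simpa [hV] using sum_nonneg fun i _ => abs_nonneg (u i - v i)
    calc |1 - U / V| * V = |(1 - U / V) * V| := by rw [abs_mul, abs_of_nonneg (sum_nonneg hv)]
      _ = |V - U| := by congr 1; field_simp
      _ = |∑ i ∈ s, (v i - u i)| := by rw [sum_sub_distrib]
      _ ≤ ∑ i ∈ s, |u i - v i| := by
          simpa only [abs_sub_comm] using abs_sum_le_sum_abs (fun i => v i - u i) s
  calc ∑ i ∈ s, |u i - U / V * v i| ≤ ∑ i ∈ s, (|u i - v i| + |1 - U / V| * v i) :=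
        sum_le_sum hsplit
    _ = ∑ i ∈ s, |u i - v i| + |1 - U / V| * V := by rw [sum_add_distrib, mul_sum]
    _ ≤ 2 * ∑ i ∈ s, |u i - v i| := by linarith

theorem probability_perturbation_bound_general (N m : ℕ)
    (a b : Fin N → ℝ)
    (hb : ∀ j, 0 ≤ b j)
    (ε : ℝ) (hab : ∀ j, |a j - b j| ≤ ε)
    (s : Fin N → ℝ) (S : ℝ) (hs : ∀ j, 0 < s j) (hsS : ∀ j, s j ≤ S)
    (L : Fin N → Matrix (Fin m) (Fin m) ℝ)
    (M : ℝ) (hL : ∀ j, rowSumNorm (L j) ≤ M) :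
    rowSumNorm ((∑ j, (a j * s j) • L j)
        - ((∑ j, a j * s j) / (∑ j, b j * s j)) • ∑ j, (b j * s j) • L j)
      ≤ 2 * N * S * M * ε := by
  simp only [rowSumNorm_eq_norm] at hL ⊢
  obtain rfl | hN := N.eq_zero_or_pos
  · simp
  have hM : 0 ≤ M := (norm_nonneg _).trans (hL ⟨0, hN⟩)
  set r := (∑ j, a j * s j) / (∑ j, b j * s j)
  have hcombine : (∑ j, (a j * s j) • L j) - r • ∑ j, (b j * s j) • L j
      = ∑ j, (a j * s j - r * (b j * s j)) • L j := by
    simp only [smul_sum, smul_smul, ← sum_sub_distrib, sub_smul]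
  have hweights : ∑ j, |a j * s j - r * (b j * s j)| ≤ 2 * N * S * ε := calc
    _ ≤ 2 * ∑ j, |a j * s j - b j * s j| :=
        sum_abs_sub_div_mul_le _ _ _ fun j _ => mul_nonneg (hb j) (hs j).le
    _ ≤ 2 * ∑ _j : Fin N, ε * S := by
        gcongr with j
        rw [← sub_mul, abs_mul, abs_of_pos (hs j)]
        exact mul_le_mul (hab j) (hsS j) (hs j).le ((abs_nonneg _).trans (hab j))
    _ = 2 * N * S * ε := by simp only [sum_const, card_univ, Fintype.card_fin, nsmul_eq_mul]; ring
  rw [hcombine]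
  calc _ ≤ (∑ j, |a j * s j - r * (b j * s j)|) * M := norm_sum_smul_le _ _ _ fun j _ => hL j
    _ ≤ 2 * N * S * ε * M := by gcongr
    _ = 2 * N * S * M * ε := by ring

/-- Abstract perturbation bound: for probability vectors a, b with |a_j − b_j| ≤ ε,
sojourn times 0 < s_j ≤ S and matrices with ‖L(j)‖_∞ ≤ M,
‖Σ_j a_j s_j L(j) − (Σ_j a_j s_j)/(Σ_j b_j s_j)·Σ_j b_j s_j L(j)‖_∞ ≤ 2NSMε. -/
theorem probability_perturbation_bound (N m : ℕ)
    (a b : Fin N → ℝ)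
    (ha : ∀ j, 0 ≤ a j) (hb : ∀ j, 0 ≤ b j)
    (ha_sum : ∑ j, a j = 1) (hb_sum : ∑ j, b j = 1)
    (ε : ℝ) (hab : ∀ j, |a j - b j| ≤ ε)
    (s : Fin N → ℝ) (S : ℝ) (hs : ∀ j, 0 < s j) (hsS : ∀ j, s j ≤ S)
    (L : Fin N → Matrix (Fin m) (Fin m) ℝ)
    (M : ℝ) (hL : ∀ j, rowSumNorm (L j) ≤ M) :
    rowSumNorm ((∑ j, (a j * s j) • L j)
        - ((∑ j, a j * s j) / (∑ j, b j * s j)) • ∑ j, (b j * s j) • L j)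
      ≤ 2 * N * S * M * ε :=
  probability_perturbation_bound_general N m a b hb ε hab s S hs hsS L M hL
end

section
/- Let V : [τ_r, τ_{r+1}] → [0,∞) be absolutely continuous and satisfy the differential inequality V'(t) ≤ ρ₁V(t) + ρ₂·sup_{s∈[τ_r,t]}V(s) for a.e. t, with constants ρ₁, ρ₂ ≥ 0 and Δ_r = τ_{r+1} − τ_r. If e^{−ρ₁Δ_r} − ρ₂Δ_r > 0, then sup_{t∈[τ_r,τ_{r+1}]} V(t) ≤ e^{ρ₁Δ_r}(1 − ρ₂Δ_r e^{ρ₁Δ_r})^{-1} V(τ_r). -/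
/-!
Let `M` be the maximum of `V` on `[a, b]`. Bounding the memory term by `ρ₂ M` turns the
hypothesis into the linear inequality `V' ≤ ρ₁ V + ρ₂ M`, so Grönwall's inequality gives
`V ≤ (V a + ρ₂ M Δ) e^{ρ₁ Δ}` on the whole interval. Taking the supremum,
`M ≤ e^{ρ₁ Δ} V a + ρ₂ Δ e^{ρ₁ Δ} M`, which can be solved for `M` because the smallness
condition says exactly that `ρ₂ Δ e^{ρ₁ Δ} < 1`.
-/

open Set

theorem Real.exp_sub_one_le_mul_exp (y : ℝ) : Real.exp y - 1 ≤ y * Real.exp y := by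
  have h := mul_le_mul_of_nonneg_right (Real.one_sub_le_exp_neg y) (Real.exp_pos y).le
  rw [← Real.exp_add, neg_add_cancel, Real.exp_zero] at h
  linarith

theorem gronwallBound_le_add_mul_mul_exp {K ε : ℝ} (hK : 0 ≤ K) (hε : 0 ≤ ε) (δ x : ℝ) :
    gronwallBound δ K ε x ≤ (δ + ε * x) * Real.exp (K * x) := by
  rcases hK.eq_or_lt with rfl | hK
  · simp [gronwallBound_K0]
  · calc gronwallBound δ K ε x = δ * Real.exp (K * x) + ε / K * (Real.exp (K * x) - 1) := by
          rw [gronwallBound_of_K_ne_0 hK.ne']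
      _ ≤ δ * Real.exp (K * x) + ε / K * (K * x * Real.exp (K * x)) := by
          gcongr
          exact Real.exp_sub_one_le_mul_exp _
      _ = (δ + ε * x) * Real.exp (K * x) := by field_simp

theorem le_gronwallBound_of_hasDerivWithinAt_Icc {f f' : ℝ → ℝ} {K ε a b : ℝ}
    (hf : ∀ t ∈ Icc a b, HasDerivWithinAt f (f' t) (Icc a b) t)
    (bound : ∀ t ∈ Ico a b, f' t ≤ K * f t + ε) :
    ∀ t ∈ Icc a b, f t ≤ gronwallBound (f a) K ε (t - a) :=
  le_gronwallBound_of_liminf_deriv_right_le (fun t ht => (hf t ht).continuousWithinAt)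
    (fun t ht _ hr => ((hf t (Ico_subset_Icc_self ht)).mono_of_mem_nhdsWithin
      (Icc_mem_nhdsGE_of_mem ht)).liminf_right_slope_le hr) le_rfl bound

theorem le_inv_one_sub_mul_of_le_add_mul {x c q : ℝ} (hq : q < 1) (h : x ≤ c + q * x) :
    x ≤ (1 - q)⁻¹ * c := by
  rw [← div_eq_inv_mul, le_div_iff₀ (sub_pos.2 hq)]
  linarith

theorem halanay_type_bound_general (a b ρ₁ ρ₂ : ℝ)
    (hρ₁ : 0 ≤ ρ₁) (hρ₂ : 0 ≤ ρ₂)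
    (V V' : ℝ → ℝ)
    (hVnonneg : ∀ t ∈ Icc a b, 0 ≤ V t)
    (hderiv : ∀ t ∈ Icc a b, HasDerivWithinAt V (V' t) (Icc a b) t)
    (hineq : ∀ t ∈ Icc a b, V' t ≤ ρ₁ * V t + ρ₂ * sSup (V '' Icc a t))
    (hsmall : 0 < Real.exp (-ρ₁ * (b - a)) - ρ₂ * (b - a)) :
    ∀ t ∈ Icc a b,
      V t ≤ Real.exp (ρ₁ * (b - a))
            * (1 - ρ₂ * (b - a) * Real.exp (ρ₁ * (b - a)))⁻¹ * V a := by
  intro t ht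
  set Δ := b - a
  set E := Real.exp (ρ₁ * Δ)
  have ha : a ∈ Icc a b := left_mem_Icc.2 (ht.1.trans ht.2)
  have hbdd : BddAbove (V '' Icc a b) :=
    (isCompact_Icc.image_of_continuousOn fun s hs => (hderiv s hs).continuousWithinAt).bddAbove
  set M := sSup (V '' Icc a b)
  have hV_le_M : ∀ s ∈ Icc a b, V s ≤ M := fun s hs => le_csSup hbdd (mem_image_of_mem V hs)
  have hVa : 0 ≤ V a := hVnonneg a ha
  have hM : 0 ≤ M := hVa.trans (hV_le_M a ha)
  have hderiv_le : ∀ s ∈ Ico a b, V' s ≤ ρ₁ * V s + ρ₂ * M := fun s hs =>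
    (hineq s (Ico_subset_Icc_self hs)).trans <| by
      gcongr
      exact csSup_le_csSup hbdd ⟨V a, mem_image_of_mem V (left_mem_Icc.2 hs.1)⟩
        (image_mono (Icc_subset_Icc_right hs.2.le))
  have hV_le : ∀ s ∈ Icc a b, V s ≤ (V a + ρ₂ * M * Δ) * E := fun s hs =>
    calc V s ≤ gronwallBound (V a) ρ₁ (ρ₂ * M) (s - a) :=
          le_gronwallBound_of_hasDerivWithinAt_Icc hderiv hderiv_le s hs
      _ ≤ gronwallBound (V a) ρ₁ (ρ₂ * M) Δ :=
          gronwallBound_mono hVa (by positivity) hρ₁ (sub_le_sub_right hs.2 a)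
      _ ≤ (V a + ρ₂ * M * Δ) * E := gronwallBound_le_add_mul_mul_exp hρ₁ (by positivity) _ _
  have hM_le : M ≤ V a * E + ρ₂ * Δ * E * M :=
    csSup_le ⟨V a, mem_image_of_mem V ha⟩ <|
      forall_mem_image.2 fun s hs => (hV_le s hs).trans_eq (by ring)
  have hq : ρ₂ * Δ * E < 1 :=
    calc ρ₂ * Δ * E < Real.exp (-ρ₁ * Δ) * E := by gcongr; linarith
      _ = 1 := by rw [← Real.exp_add, neg_mul, neg_add_cancel, Real.exp_zero]
  calc V t ≤ M := hV_le_M t ht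
    _ ≤ (1 - ρ₂ * Δ * E)⁻¹ * (V a * E) := le_inv_one_sub_mul_of_le_add_mul hq hM_le
    _ = E * (1 - ρ₂ * Δ * E)⁻¹ * V a := by ring

/-- Halanay/Grönwall-type bound: if V ≥ 0 satisfies
V'(t) ≤ ρ₁V(t) + ρ₂·sup_{s∈[τ_r,t]}V(s) on [τ_r,τ_{r+1}] and e^{−ρ₁Δ} − ρ₂Δ > 0 with
Δ = τ_{r+1} − τ_r, then sup V ≤ e^{ρ₁Δ}(1 − ρ₂Δe^{ρ₁Δ})⁻¹ V(τ_r). -/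
theorem halanay_type_bound (a b ρ₁ ρ₂ : ℝ) (hab : a < b)
    (hρ₁ : 0 ≤ ρ₁) (hρ₂ : 0 ≤ ρ₂)
    (V V' : ℝ → ℝ)
    (hVnonneg : ∀ t ∈ Icc a b, 0 ≤ V t)
    (hderiv : ∀ t ∈ Icc a b, HasDerivWithinAt V (V' t) (Icc a b) t)
    (hineq : ∀ t ∈ Icc a b, V' t ≤ ρ₁ * V t + ρ₂ * sSup (V '' Icc a t))
    (hsmall : 0 < Real.exp (-ρ₁ * (b - a)) - ρ₂ * (b - a)) :
    ∀ t ∈ Icc a b,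
      V t ≤ Real.exp (ρ₁ * (b - a))
            * (1 - ρ₂ * (b - a) * Real.exp (ρ₁ * (b - a)))⁻¹ * V a :=
  halanay_type_bound_general a b ρ₁ ρ₂ hρ₁ hρ₂ V V' hVnonneg hderiv hineq hsmall
end

section
/- Consider the event-triggering condition ‖e(t)‖ ≤ c₀‖z(t)‖ with c₀ > 0, where e(t₀) = 0 at the event time t₀, and suppose ‖ė(t)‖ ≤ a‖z(t)‖ + b‖e(t)‖ and ‖ż(t)‖ ≤ a‖z(t)‖ + b‖e(t)‖ with a, b > 0, and ‖z(t₀)‖ > 0. Then the next time t₁ at which ‖e(t₁)‖ = c₀‖z(t₁)‖ satisfies t₁ − t₀ ≥ τ* for some τ* > 0 depending only on a, b, c₀ (and not on ‖z(t₀)‖). Specifically, the ratio φ(t) = ‖e(t)‖/‖z(t)‖ satisfies φ' ≤ (a + bφ)(1 + φ), φ(t₀) = 0, so t₁ − t₀ is bounded below by the time for the solution of ψ' = (a + bψ)(1 + ψ), ψ(t₀) = 0 to reach c₀. -/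
/-!
Grönwall's inequality applied to `t ↦ (e t, z t) - (e t₀, z t₀)`, whose derivative is bounded by
`(a + b) (‖z t₀‖ + ‖·‖)`, shows that both `‖e t‖` and `‖z t - z t₀‖` stay below
`‖z t₀‖ (exp ((a + b) (t - t₀)) - 1)`. At an event `‖e t₁‖ = c₀ ‖z t₁‖` this quantity must
therefore have reached `c₀ / (1 + c₀) · ‖z t₀‖`, which takes time at least
`log (1 + c₀ / (1 + c₀)) / (a + b)`, independently of `‖z t₀‖`.
-/

open Set Real

theorem gronwallBound_zero_mul (K r x : ℝ) :
    gronwallBound 0 K (K * r) x = r * (exp (K * x) - 1) := by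
  rcases eq_or_ne K 0 with rfl | hK
  · simp [gronwallBound_K0]
  · rw [gronwallBound_of_K_ne_0 hK]
    field_simp
    ring

theorem norm_sub_le_of_norm_deriv_right_le_mul_norm {E : Type*} [NormedAddCommGroup E]
    [NormedSpace ℝ E] {f f' : ℝ → E} {K t₀ t₁ : ℝ} (hK : 0 ≤ K)
    (hf : ContinuousOn f (Icc t₀ t₁))
    (hf' : ∀ x ∈ Ico t₀ t₁, HasDerivWithinAt f (f' x) (Ici x) x)
    (bound : ∀ x ∈ Ico t₀ t₁, ‖f' x‖ ≤ K * ‖f x‖) :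
    ∀ t ∈ Icc t₀ t₁, ‖f t - f t₀‖ ≤ ‖f t₀‖ * (exp (K * (t - t₀)) - 1) := by
  intro t ht
  rw [← gronwallBound_zero_mul]
  refine norm_le_gronwallBound_of_norm_deriv_right_le (f := fun x => f x - f t₀)
    (hf.sub continuousOn_const) (fun x hx => (hf' x hx).sub_const _) (by simp)
    (fun x hx => ?_) t ht
  calc ‖f' x‖ ≤ K * ‖f x‖ := bound x hx
    _ ≤ K * (‖f x - f t₀‖ + ‖f t₀‖) := by gcongr; exact norm_le_norm_sub_add _ _
    _ = K * ‖f x - f t₀‖ + K * ‖f t₀‖ := by ring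

theorem norm_prod_le_add_mul_norm_prod {E : Type*} [SeminormedAddCommGroup E] {a b : ℝ}
    (ha : 0 ≤ a) (hb : 0 ≤ b) {e z e' z' : E} (he' : ‖e'‖ ≤ a * ‖z‖ + b * ‖e‖)
    (hz' : ‖z'‖ ≤ a * ‖z‖ + b * ‖e‖) : ‖(e', z')‖ ≤ (a + b) * ‖(e, z)‖ := by
  have hgrowth : a * ‖z‖ + b * ‖e‖ ≤ (a + b) * ‖(e, z)‖ := by
    rw [add_mul]
    gcongr
    exacts [norm_snd_le (e, z), norm_fst_le (e, z)]
  exact max_le (he'.trans hgrowth) (hz'.trans hgrowth)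

theorem div_one_add_le_of_norm_eq_mul_norm {E : Type*} [SeminormedAddCommGroup E]
    {e₁ z₀ z₁ : E} {c v : ℝ} (hc : 0 ≤ c) (hz₀ : 0 < ‖z₀‖) (he₁ : ‖e₁‖ ≤ ‖z₀‖ * v)
    (hz₁ : ‖z₁ - z₀‖ ≤ ‖z₀‖ * v) (hevent : ‖e₁‖ = c * ‖z₁‖) : c / (1 + c) ≤ v := by
  have hz₁_low : ‖z₀‖ * (1 - v) ≤ ‖z₁‖ := by
    have := norm_sub_norm_le z₀ z₁
    rw [norm_sub_rev] at this
    linarith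
  have : ‖z₀‖ * (c * (1 - v)) ≤ ‖z₀‖ * v := by
    calc ‖z₀‖ * (c * (1 - v)) = c * (‖z₀‖ * (1 - v)) := by ring
      _ ≤ c * ‖z₁‖ := by gcongr
      _ ≤ ‖z₀‖ * v := hevent ▸ he₁
  rw [div_le_iff₀ (by positivity)]
  nlinarith [le_of_mul_le_mul_left this hz₀]

/-- Uniform positive lower bound on inter-event times for the event-triggering rule
‖e(t)‖ ≤ c₀‖z(t)‖: under the growth bounds ‖ė‖, ‖ż‖ ≤ a‖z‖ + b‖e‖, with e reset to 0
at the event time t₀ and ‖z(t₀)‖ > 0, any later time t₁ at which ‖e(t₁)‖ = c₀‖z(t₁)‖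
satisfies t₁ − t₀ ≥ τ* for some τ* > 0 depending only on a, b, c₀. -/
theorem inter_event_time_lower_bound (n : ℕ) (a b c₀ : ℝ)
    (ha : 0 < a) (hb : 0 < b) (hc₀ : 0 < c₀) :
    ∃ τ : ℝ, 0 < τ ∧
      ∀ (t₀ : ℝ) (e z e' z' : ℝ → EuclideanSpace ℝ (Fin n)),
        (∀ t ∈ Ici t₀, HasDerivWithinAt e (e' t) (Ici t₀) t) →
        (∀ t ∈ Ici t₀, HasDerivWithinAt z (z' t) (Ici t₀) t) →
        e t₀ = 0 → 0 < ‖z t₀‖ →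
        (∀ t ∈ Ici t₀, ‖e' t‖ ≤ a * ‖z t‖ + b * ‖e t‖) →
        (∀ t ∈ Ici t₀, ‖z' t‖ ≤ a * ‖z t‖ + b * ‖e t‖) →
        ∀ t₁, t₀ < t₁ → ‖e t₁‖ = c₀ * ‖z t₁‖ → τ ≤ t₁ - t₀ := by
  have hK : 0 < a + b := add_pos ha hb
  have hthreshold : 1 < 1 + c₀ / (1 + c₀) := by simp only [lt_add_iff_pos_right]; positivity
  refine ⟨log (1 + c₀ / (1 + c₀)) / (a + b), div_pos (log_pos hthreshold) hK, ?_⟩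
  intro t₀ e z e' z' hde hdz he₀ hz₀ hbe hbz t₁ ht₁ hevent
  have hdeviation := norm_sub_le_of_norm_deriv_right_le_mul_norm (f := fun t => (e t, z t))
    (f' := fun t => (e' t, z' t)) (t₁ := t₁) hK.le
    (fun t ht => ((hde t ht.1).prodMk (hdz t ht.1)).continuousWithinAt.mono Icc_subset_Ici_self)
    (fun x hx => ((hde x hx.1).prodMk (hdz x hx.1)).mono (Ici_subset_Ici.mpr hx.1))
    (fun x hx => norm_prod_le_add_mul_norm_prod ha.le hb.le (hbe x hx.1) (hbz x hx.1))
    t₁ ⟨ht₁.le, le_rfl⟩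
  have hnorm₀ : ‖(e t₀, z t₀)‖ = ‖z t₀‖ := by simp [he₀]
  rw [hnorm₀, Prod.norm_def, max_le_iff, Prod.fst_sub, Prod.snd_sub, he₀, sub_zero] at hdeviation
  have hv := div_one_add_le_of_norm_eq_mul_norm hc₀.le hz₀ hdeviation.1 hdeviation.2 hevent
  rw [div_le_iff₀ hK, log_le_iff_le_exp (by positivity), mul_comm]
  linarith
end
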